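/- Fix ρ ∈ 𝒞 and P ∈ 𝒫^ρ_d, and let Z be a random d-vector with law P. Then for every z ∈ ℝ^d, MD^ρ(z,P) = inf_{u ∈ S^{d−1}} E[|ψ₋(u'(Z−z))|·𝟙[u'(Z−z) ≤ 0]] / E[|ψ₋(u'(Z−z))|]. -/

import Mathlib

open MeasureTheory Set Filter
open scoped RealInnerProductSpace ENNReal

noncomputable section

/-- The class `𝒞` of loss functions: convex, nonnegative, even, vanishing only at `0`. -/
def LossClass (ρ : ℝ → ℝ) : Prop :=
  ConvexOn ℝ Set.univ ρ ∧ (∀ t, 0 ≤ ρ t) ∧ (∀ t, ρ (-t) = ρ t) ∧ (∀ t, ρ t = 0 ↔ t = 0)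

/-- `ψ` is the left-derivative of `ρ`. -/
def IsLeftDeriv (ρ ψ : ℝ → ℝ) : Prop :=
  ∀ x : ℝ, HasDerivWithinAt ρ (ψ x) (Set.Iio x) x

/-- `G^ρ_Q(θ) = E_Q[|ψ₋(Y−θ)|·𝟙[Y ≤ θ]] / E_Q[|ψ₋(Y−θ)|]` (equal to `0` when the
denominator vanishes, by the Lean convention for division by zero). -/
def Gfun (ψ : ℝ → ℝ) (Q : Measure ℝ) (θ : ℝ) : ℝ :=
  (∫ y, |ψ (y - θ)| * (if y ≤ θ then 1 else 0) ∂Q) / ∫ y, |ψ (y - θ)| ∂Q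

/-- The order-`α` M-quantile `θ^ρ_α(Q) = inf{θ : G^ρ_Q(θ) ≥ α}` of a law `Q` on `ℝ`. -/
def MQuant (ψ : ℝ → ℝ) (Q : Measure ℝ) (α : ℝ) : ℝ :=
  sInf {θ : ℝ | α ≤ Gfun ψ Q θ}

/-- The pushforward `P_u` of `P` under `z ↦ u'z`. -/
def dirProj {d : ℕ} (P : Measure (EuclideanSpace ℝ (Fin d)))
    (u : EuclideanSpace ℝ (Fin d)) : Measure ℝ :=
  P.map (fun z => ⟪u, z⟫)

/-- The order-`α` M-quantile halfspace `H^ρ_{α,u}(P) = {z : u'z ≥ θ^ρ_α(P_u)}`. -/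
def MHalf {d : ℕ} (ψ : ℝ → ℝ) (P : Measure (EuclideanSpace ℝ (Fin d))) (α : ℝ)
    (u : EuclideanSpace ℝ (Fin d)) : Set (EuclideanSpace ℝ (Fin d)) :=
  {z | MQuant ψ (dirProj P u) α ≤ ⟪u, z⟫}

/-- The order-`α` M-quantile hyperplane `π^ρ_{α,u}(P) = {z : u'z = θ^ρ_α(P_u)}`. -/
def MHyp {d : ℕ} (ψ : ℝ → ℝ) (P : Measure (EuclideanSpace ℝ (Fin d))) (α : ℝ)
    (u : EuclideanSpace ℝ (Fin d)) : Set (EuclideanSpace ℝ (Fin d)) :=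
  {z | ⟪u, z⟫ = MQuant ψ (dirProj P u) α}

/-- The order-`α` M-quantile region `R^ρ_α(P) = ⋂_{u ∈ S^{d−1}} H^ρ_{α,u}(P)`. -/
def MRegion {d : ℕ} (ψ : ℝ → ℝ) (P : Measure (EuclideanSpace ℝ (Fin d))) (α : ℝ) :
    Set (EuclideanSpace ℝ (Fin d)) :=
  ⋂ u ∈ {u : EuclideanSpace ℝ (Fin d) | ‖u‖ = 1}, MHalf ψ P α u

/-- The halfspace M-depth `MD^ρ(z,P) = sup{α > 0 : z ∈ R^ρ_α(P)}` (with `sup ∅ = 0`,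
which is the Lean convention for `sSup` of the empty set of reals). -/
def MDepth {d : ℕ} (ψ : ℝ → ℝ) (P : Measure (EuclideanSpace ℝ (Fin d)))
    (z : EuclideanSpace ℝ (Fin d)) : ℝ :=
  sSup {α : ℝ | α ∈ Set.Ioo (0 : ℝ) 1 ∧ z ∈ MRegion ψ P α}

/-- The C-support `C_P = {z : P[{y : u'y ≤ u'z}] > 0 for every unit u}`. -/
def Csupport {d : ℕ} (P : Measure (EuclideanSpace ℝ (Fin d))) :
    Set (EuclideanSpace ℝ (Fin d)) :=
  {z | ∀ u : EuclideanSpace ℝ (Fin d), ‖u‖ = 1 → 0 < P {y | ⟪u, y⟫ ≤ ⟪u, z⟫}}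

open Topology

/-!
Fix a direction `u` and write `G(θ) = N(θ) / (N(θ) + M(θ))` for the ratio defining the
M-quantiles of `P_u`, where `N(θ) = E[ψ(Y - θ)⁻]` and `M(θ) = E[ψ(Y - θ)⁺]`. The left derivative
`ψ` of a convex function with strict minimum at `0` is nondecreasing, left-continuous and has the
sign of its argument away from `0`; hence `N` is nondecreasing, `M` is nonincreasing, both are
right-continuous by dominated convergence, and `G` is a right-continuous nondecreasing function
running from `0` at `-∞` to `1` at `+∞`. For such a `G` the generalised inverse satisfies
`θ_α ≤ θ ↔ α ≤ G(θ)`, so `z` lies in the region of order `α ∈ (0, 1)` iff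
`α ≤ inf_u G_u(u'z)`, and the supremum of these `α` is that infimum.
-/

lemma monotone_div_add_of_antitone {f g : ℝ → ℝ} (hf : Monotone f) (hg : Antitone g)
    (hf0 : ∀ x, 0 ≤ f x) (hg0 : ∀ x, 0 ≤ g x) (hfg : ∀ x, 0 < f x + g x) :
    Monotone fun x => f x / (f x + g x) := by
  intro x y hxy
  rw [div_le_div_iff₀ (hfg x) (hfg y)]
  nlinarith [mul_le_mul (hf hxy) (hg hxy) (hg0 y) (hf0 y)]

lemma tendsto_div_add_of_tendsto_zero {ι : Type*} {l : Filter ι} {f g : ι → ℝ} {c : ℝ}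
    (hc : 0 < c) (hf : Tendsto f l (𝓝 0)) (hf0 : ∀ i, 0 ≤ f i) (hg : ∀ᶠ i in l, c ≤ g i) :
    Tendsto (fun i => f i / (f i + g i)) l (𝓝 0) := by
  refine squeeze_zero' (hg.mono fun i hi => div_nonneg (hf0 i) (by linarith [hf0 i]))
    (hg.mono fun i hi => div_le_div_of_nonneg_left (hf0 i) hc (by linarith [hf0 i]))
    (by simpa using hf.div_const c)

lemma sInf_setOf_le_le_iff {G : ℝ → ℝ} (hG : Monotone G)
    (hrc : ∀ x, ContinuousWithinAt G (Ioi x) x) {α : ℝ} (hlo : ∃ θ, G θ < α)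
    (hhi : ∃ θ, α ≤ G θ) (θ₀ : ℝ) :
    sInf {θ | α ≤ G θ} ≤ θ₀ ↔ α ≤ G θ₀ := by
  obtain ⟨θlo, hθlo⟩ := hlo
  have hbdd : BddBelow {θ | α ≤ G θ} :=
    ⟨θlo, fun θ hθ => le_of_not_gt fun h => (hθ.trans (hG h.le)).not_gt hθlo⟩
  refine ⟨fun h => le_trans ?_ (hG h), fun h => csInf_le hbdd h⟩
  refine ge_of_tendsto (hrc _) (eventually_nhdsWithin_of_forall fun θ hθ => ?_)
  obtain ⟨s, hs, hsθ⟩ := exists_lt_of_csInf_lt hhi hθ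
  exact le_trans hs (hG hsθ.le)

lemma sSup_Ioo_inter_Iic {I : ℝ} (h0 : 0 ≤ I) (h1 : I ≤ 1) :
    sSup (Ioo 0 1 ∩ Iic I) = I := by
  rcases h0.eq_or_lt with rfl | h0
  · rw [show Ioo (0 : ℝ) 1 ∩ Iic 0 = ∅ from eq_empty_of_forall_notMem fun a ha =>
      ha.1.1.not_ge ha.2, Real.sSup_empty]
  refine le_antisymm (csSup_le ⟨I / 2, ⟨by linarith, by linarith⟩, show I / 2 ≤ I by linarith⟩
    fun _ h => h.2) ((csSup_Ioo h0).ge.trans ?_)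
  exact csSup_le_csSup ⟨1, fun _ h => h.1.2.le⟩ (nonempty_Ioo.2 h0)
    fun a ha => ⟨⟨ha.1, ha.2.trans_le h1⟩, ha.2.le⟩

lemma sSup_setOf_mem_Ioo_forall_le {ι : Type*} [Nonempty ι] {g : ι → ℝ}
    (h0 : ∀ i, 0 ≤ g i) (h1 : ∀ i, g i ≤ 1) :
    sSup {α | α ∈ Ioo (0 : ℝ) 1 ∧ ∀ i, α ≤ g i} = ⨅ i, g i := by
  have hbdd : BddBelow (range g) := ⟨0, forall_mem_range.2 h0⟩
  have : {α | α ∈ Ioo (0 : ℝ) 1 ∧ ∀ i, α ≤ g i} = Ioo 0 1 ∩ Iic (⨅ i, g i) := by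
    ext α
    exact and_congr_right fun _ => (le_ciInf_iff hbdd).symm
  rw [this, sSup_Ioo_inter_Iic (le_ciInf h0) ((ciInf_le hbdd (Classical.arbitrary ι)).trans (h1 _))]

lemma abs_posPart_le_abs (x : ℝ) : |x⁺| ≤ |x| := by
  rw [abs_of_nonneg (posPart_nonneg x), ← posPart_add_negPart]
  exact le_add_of_nonneg_right (negPart_nonneg x)

lemma abs_negPart_le_abs (x : ℝ) : |x⁻| ≤ |x| := by
  rw [abs_of_nonneg (negPart_nonneg x), ← posPart_add_negPart]
  exact le_add_of_nonneg_left (posPart_nonneg x)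

structure IsScoreFunction (ψ : ℝ → ℝ) : Prop where
  monotone : Monotone ψ
  continuousWithinAt_Iio : ∀ x, ContinuousWithinAt ψ (Iio x) x
  neg_of_neg : ∀ s < 0, ψ s < 0
  pos_of_pos : ∀ s, 0 < s → 0 < ψ s

namespace IsScoreFunction

variable {ψ : ℝ → ℝ} (hψ : IsScoreFunction ψ)
include hψ

lemma nonpos_of_nonpos {s : ℝ} (hs : s ≤ 0) : ψ s ≤ 0 :=
  (hψ.monotone hs).trans <| le_of_tendsto (hψ.continuousWithinAt_Iio 0)
    (eventually_nhdsWithin_of_forall fun r hr => (hψ.neg_of_neg r hr).le)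

lemma ne_zero {s : ℝ} (hs : s ≠ 0) : ψ s ≠ 0 :=
  hs.lt_or_gt.elim (fun h => (hψ.neg_of_neg s h).ne) fun h => (hψ.pos_of_pos s h).ne'

lemma measurable : Measurable ψ := hψ.monotone.measurable

lemma abs_mul_ite_eq_negPart (t θ : ℝ) :
    |ψ (t - θ)| * (if t ≤ θ then 1 else 0) = (ψ (t - θ))⁻ := by
  split_ifs with h
  · have hle := hψ.nonpos_of_nonpos (sub_nonpos.2 h)
    rw [mul_one, abs_of_nonpos hle, negPart_eq_neg.2 hle]
  · rw [mul_zero, negPart_eq_zero.2 (hψ.pos_of_pos _ (sub_pos.2 (not_le.1 h))).le]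

lemma tendsto_comp_sub_nhdsGT (t θ₀ : ℝ) :
    Tendsto (fun θ => ψ (t - θ)) (𝓝[>] θ₀) (𝓝 (ψ (t - θ₀))) := by
  refine (hψ.continuousWithinAt_Iio (t - θ₀)).tendsto.comp (tendsto_nhdsWithin_iff.2
    ⟨((continuous_sub_left t).tendsto θ₀).mono_left nhdsWithin_le_nhds, ?_⟩)
  filter_upwards [self_mem_nhdsWithin] with θ hθ using sub_lt_sub_left hθ t

end IsScoreFunction

namespace IsLeftDeriv

variable {ρ ψ : ℝ → ℝ} (hψ : IsLeftDeriv ρ ψ) (hρ : ConvexOn ℝ univ ρ)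
include hψ hρ

lemma le_slope {x y : ℝ} (hxy : x < y) : ψ x ≤ slope ρ x y := by
  have hx : x ∈ interior univ := by simp
  rw [← (hψ x).derivWithin (uniqueDiffWithinAt_Iio x)]
  exact (hρ.leftDeriv_le_rightDeriv_of_mem_interior hx).trans
    (hρ.rightDeriv_le_slope_of_mem_interior hx (mem_univ y) hxy)

lemma slope_le {x y : ℝ} (hxy : x < y) : slope ρ x y ≤ ψ y :=
  hρ.slope_le_of_hasDerivWithinAt_Iio (mem_univ x) (mem_univ y) hxy (hψ y)

lemma monotone : Monotone ψ := fun _ _ hxy =>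
  hxy.eq_or_lt.elim (fun h => h ▸ le_rfl) fun h => (hψ.le_slope hρ h).trans (hψ.slope_le hρ h)

lemma continuousWithinAt_Iio (x : ℝ) : ContinuousWithinAt ψ (Iio x) x := by
  set L := sSup (ψ '' Iio x)
  have hL : Tendsto ψ (𝓝[<] x) (𝓝 L) := (hψ.monotone hρ).tendsto_nhdsLT x
  have hLx : L ≤ ψ x := le_of_tendsto hL
    (eventually_nhdsWithin_of_forall fun s hs => hψ.monotone hρ (le_of_lt hs))
  -- each secant slope `slope ρ w x` is a limit of slopes `slope ρ w s ≤ ψ s` with `s ↑ x`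
  have hslope : ∀ w < x, slope ρ w x ≤ L := by
    intro w hw
    have hcont : Tendsto (slope ρ w) (𝓝[<] x) (𝓝 (slope ρ w x)) := by
      rw [slope_fun_def_field]
      exact ((hψ x).continuousWithinAt.tendsto.sub_const _).div
        ((tendsto_id.mono_left nhdsWithin_le_nhds).sub_const _) (sub_ne_zero.2 hw.ne')
    refine le_of_tendsto_of_tendsto hcont hL ?_
    filter_upwards [Ioo_mem_nhdsLT hw] with s hs using hψ.slope_le hρ hs.1
  have hxL : ψ x ≤ L :=
    le_of_tendsto ((hasDerivWithinAt_iff_tendsto_slope' self_notMem_Iio).1 (hψ x))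
      (eventually_nhdsWithin_of_forall fun w hw => slope_comm ρ x w ▸ hslope w hw)
  rwa [ContinuousWithinAt, ← le_antisymm hLx hxL]

lemma isScoreFunction (hmin : ∀ s ≠ 0, ρ 0 < ρ s) : IsScoreFunction ψ where
  monotone := hψ.monotone hρ
  continuousWithinAt_Iio := hψ.continuousWithinAt_Iio hρ
  neg_of_neg s hs := (hψ.le_slope hρ hs).trans_lt <| by
    rw [slope_def_field]
    exact div_neg_of_neg_of_pos (sub_neg.2 (hmin s hs.ne)) (sub_pos.2 hs)
  pos_of_pos s hs := lt_of_lt_of_le (by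
    rw [slope_def_field]
    exact div_pos (sub_pos.2 (hmin s hs.ne')) (sub_pos.2 hs)) (hψ.slope_le hρ hs)

end IsLeftDeriv

lemma LossClass.isScoreFunction {ρ ψ : ℝ → ℝ} (hρ : LossClass ρ) (hψ : IsLeftDeriv ρ ψ) :
    IsScoreFunction ψ := by
  obtain ⟨hconv, hnonneg, -, hzero⟩ := hρ
  refine hψ.isScoreFunction hconv fun s hs => ?_
  rw [(hzero 0).2 rfl]
  exact (hnonneg s).lt_of_ne (Ne.symm (mt (hzero s).1 hs))

lemma exists_measure_Iio_pos {Q : Measure ℝ} (hQ : Q ≠ 0) : ∃ a, 0 < Q (Iio a) := by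
  obtain ⟨a, ha⟩ := ((tendsto_measure_Iic_atTop Q).eventually
    (eventually_gt_nhds (pos_iff_ne_zero.2 (Measure.measure_univ_ne_zero.2 hQ)))).exists
  exact ⟨a + 1, ha.trans_le (measure_mono (Iic_subset_Iio.2 (lt_add_one a)))⟩

lemma exists_measure_Ioi_pos {Q : Measure ℝ} (hQ : Q ≠ 0) : ∃ a, 0 < Q (Ioi a) := by
  obtain ⟨a, ha⟩ := ((tendsto_measure_Ici_atBot Q).eventually
    (eventually_gt_nhds (pos_iff_ne_zero.2 (Measure.measure_univ_ne_zero.2 hQ)))).exists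
  exact ⟨a - 1, ha.trans_le (measure_mono (Ici_subset_Ioi.2 (sub_one_lt a)))⟩

lemma Gfun_nonneg (ψ : ℝ → ℝ) (Q : Measure ℝ) (θ : ℝ) : 0 ≤ Gfun ψ Q θ :=
  div_nonneg (integral_nonneg fun _ => by positivity) (integral_nonneg fun _ => abs_nonneg _)

lemma Gfun_le_one {ψ : ℝ → ℝ} {Q : Measure ℝ} {θ : ℝ}
    (hint : Integrable (fun t => |ψ (t - θ)|) Q) : Gfun ψ Q θ ≤ 1 := by
  refine div_le_one_of_le₀ (integral_mono_of_nonneg (ae_of_all _ fun _ => by positivity) hint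
    (ae_of_all _ fun t => ?_)) (integral_nonneg fun _ => abs_nonneg _)
  dsimp only
  split_ifs <;> simp

section Score

variable {ψ : ℝ → ℝ} {Q : Measure ℝ}

def lowerScore (ψ : ℝ → ℝ) (Q : Measure ℝ) (θ : ℝ) : ℝ := ∫ t, (ψ (t - θ))⁻ ∂Q

def upperScore (ψ : ℝ → ℝ) (Q : Measure ℝ) (θ : ℝ) : ℝ := ∫ t, (ψ (t - θ))⁺ ∂Q

lemma lowerScore_nonneg (θ : ℝ) : 0 ≤ lowerScore ψ Q θ :=
  integral_nonneg fun _ => negPart_nonneg _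

lemma upperScore_nonneg (θ : ℝ) : 0 ≤ upperScore ψ Q θ :=
  integral_nonneg fun _ => posPart_nonneg _

variable (hψ : IsScoreFunction ψ) (hint : ∀ θ, Integrable (fun t => |ψ (t - θ)|) Q)
include hψ hint

lemma integrable_comp_comp_sub {f : ℝ → ℝ} (hf : Continuous f) (hfx : ∀ x, |f x| ≤ |x|)
    (θ : ℝ) : Integrable (fun t => f (ψ (t - θ))) Q :=
  (hint θ).mono'
    (hf.measurable.comp (hψ.measurable.comp (measurable_sub_const θ))).aestronglyMeasurable
    (ae_of_all _ fun _ => hfx _)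

lemma integrable_negPart_comp_sub (θ : ℝ) : Integrable (fun t => (ψ (t - θ))⁻) Q :=
  integrable_comp_comp_sub hψ hint continuous_negPart abs_negPart_le_abs θ

lemma integrable_posPart_comp_sub (θ : ℝ) : Integrable (fun t => (ψ (t - θ))⁺) Q :=
  integrable_comp_comp_sub hψ hint continuous_posPart abs_posPart_le_abs θ

lemma continuousWithinAt_integral_comp_comp_sub {f : ℝ → ℝ} (hf : Continuous f)
    (hfx : ∀ x, |f x| ≤ |x|) (θ₀ : ℝ) :
    ContinuousWithinAt (fun θ => ∫ t, f (ψ (t - θ)) ∂Q) (Ioi θ₀) θ₀ := by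
  refine tendsto_integral_filter_of_dominated_convergence
    (fun t => |ψ (t - (θ₀ + 1))| + |ψ (t - θ₀)|)
    (Eventually.of_forall fun θ => (integrable_comp_comp_sub hψ hint hf hfx θ).aestronglyMeasurable)
    ?_ ((hint (θ₀ + 1)).add (hint θ₀))
    (ae_of_all _ fun t => (hf.tendsto _).comp (hψ.tendsto_comp_sub_nhdsGT t θ₀))
  filter_upwards [Ioc_mem_nhdsGT (lt_add_one θ₀)] with θ hθ
  refine ae_of_all _ fun t => (hfx _).trans ?_
  exact (abs_le_max_abs_abs (hψ.monotone (by linarith [hθ.2]))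
    (hψ.monotone (by linarith [hθ.1]))).trans (max_le_add_of_nonneg (abs_nonneg _) (abs_nonneg _))

lemma integral_abs_eq_lowerScore_add_upperScore (θ : ℝ) :
    ∫ t, |ψ (t - θ)| ∂Q = lowerScore ψ Q θ + upperScore ψ Q θ := by
  rw [lowerScore, upperScore, ← integral_add (integrable_negPart_comp_sub hψ hint θ)
    (integrable_posPart_comp_sub hψ hint θ)]
  simp_rw [add_comm _ (_⁺), posPart_add_negPart]

lemma Gfun_eq_lowerScore_div : Gfun ψ Q = fun θ =>
    lowerScore ψ Q θ / (lowerScore ψ Q θ + upperScore ψ Q θ) := by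
  ext θ
  rw [Gfun, integral_abs_eq_lowerScore_add_upperScore hψ hint, lowerScore]
  simp_rw [hψ.abs_mul_ite_eq_negPart]

lemma lowerScore_mono : Monotone (lowerScore ψ Q) := fun _ _ h =>
  integral_mono (integrable_negPart_comp_sub hψ hint _) (integrable_negPart_comp_sub hψ hint _)
    fun _ => negPart_anti (hψ.monotone (by linarith))

lemma upperScore_anti : Antitone (upperScore ψ Q) := fun _ _ h =>
  integral_mono (integrable_posPart_comp_sub hψ hint _) (integrable_posPart_comp_sub hψ hint _)
    fun _ => posPart_mono (hψ.monotone (by linarith))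

lemma lowerScore_pos {θ : ℝ} (hQ : 0 < Q (Iio θ)) : 0 < lowerScore ψ Q θ := by
  rw [lowerScore, integral_pos_iff_support_of_nonneg (fun _ => negPart_nonneg _)
    (integrable_negPart_comp_sub hψ hint θ)]
  exact hQ.trans_le (measure_mono fun t ht =>
    (negPart_pos (hψ.neg_of_neg _ (sub_neg.2 ht))).ne')

lemma upperScore_pos {θ : ℝ} (hQ : 0 < Q (Ioi θ)) : 0 < upperScore ψ Q θ := by
  rw [upperScore, integral_pos_iff_support_of_nonneg (fun _ => posPart_nonneg _)
    (integrable_posPart_comp_sub hψ hint θ)]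
  exact hQ.trans_le (measure_mono fun t ht =>
    (posPart_pos (hψ.pos_of_pos _ (sub_pos.2 ht))).ne')

lemma lowerScore_add_upperScore_pos {θ : ℝ} (hQ : Q {θ}ᶜ ≠ 0) :
    0 < lowerScore ψ Q θ + upperScore ψ Q θ := by
  rw [← integral_abs_eq_lowerScore_add_upperScore hψ hint,
    integral_pos_iff_support_of_nonneg (fun _ => abs_nonneg _) (hint θ)]
  exact (pos_iff_ne_zero.2 hQ).trans_le (measure_mono fun t ht =>
    abs_ne_zero.2 (hψ.ne_zero (sub_ne_zero.2 ht)))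

lemma tendsto_lowerScore_atBot : Tendsto (lowerScore ψ Q) atBot (𝓝 0) := by
  have := tendsto_integral_filter_of_dominated_convergence (l := atBot)
    (F := fun θ t => (ψ (t - θ))⁻) (f := fun _ => 0) (fun t => |ψ (t - 0)|)
    (Eventually.of_forall fun θ => (integrable_negPart_comp_sub hψ hint θ).aestronglyMeasurable)
    ?_ (hint 0) (ae_of_all _ fun t => tendsto_const_nhds.congr' ?_)
  · rw [integral_zero] at this
    exact this
  · filter_upwards [eventually_le_atBot 0] with θ hθ
    refine ae_of_all _ fun t => ?_
    rw [Real.norm_eq_abs, abs_of_nonneg (negPart_nonneg _)]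
    exact (negPart_anti (hψ.monotone (by linarith))).trans
      ((le_abs_self _).trans (abs_negPart_le_abs _))
  · filter_upwards [eventually_lt_atBot t] with θ hθ
    exact (negPart_eq_zero.2 (hψ.pos_of_pos _ (sub_pos.2 hθ)).le).symm

lemma tendsto_upperScore_atTop : Tendsto (upperScore ψ Q) atTop (𝓝 0) := by
  have := tendsto_integral_filter_of_dominated_convergence (l := atTop)
    (F := fun θ t => (ψ (t - θ))⁺) (f := fun _ => 0) (fun t => |ψ (t - 0)|)
    (Eventually.of_forall fun θ => (integrable_posPart_comp_sub hψ hint θ).aestronglyMeasurable)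
    ?_ (hint 0) (ae_of_all _ fun t => tendsto_const_nhds.congr' ?_)
  · rw [integral_zero] at this
    exact this
  · filter_upwards [eventually_ge_atTop 0] with θ hθ
    refine ae_of_all _ fun t => ?_
    rw [Real.norm_eq_abs, abs_of_nonneg (posPart_nonneg _)]
    exact (posPart_mono (hψ.monotone (by linarith))).trans
      ((le_abs_self _).trans (abs_posPart_le_abs _))
  · filter_upwards [eventually_ge_atTop t] with θ hθ
    exact (posPart_eq_zero.2 (hψ.nonpos_of_nonpos (sub_nonpos.2 hθ))).symm

end Score

section Quantile

variable {ψ : ℝ → ℝ} {Q : Measure ℝ} (hψ : IsScoreFunction ψ)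
  (hint : ∀ θ, Integrable (fun t => |ψ (t - θ)|) Q)
include hψ hint

lemma Gfun_monotone (hQ : ∀ θ, Q {θ}ᶜ ≠ 0) : Monotone (Gfun ψ Q) := by
  rw [Gfun_eq_lowerScore_div hψ hint]
  exact monotone_div_add_of_antitone (lowerScore_mono hψ hint) (upperScore_anti hψ hint)
    lowerScore_nonneg upperScore_nonneg fun θ => lowerScore_add_upperScore_pos hψ hint (hQ θ)

lemma Gfun_continuousWithinAt_Ioi {θ : ℝ} (hQ : Q {θ}ᶜ ≠ 0) :
    ContinuousWithinAt (Gfun ψ Q) (Ioi θ) θ := by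
  have hN : ContinuousWithinAt (lowerScore ψ Q) (Ioi θ) θ :=
    continuousWithinAt_integral_comp_comp_sub hψ hint continuous_negPart abs_negPart_le_abs θ
  have hM : ContinuousWithinAt (upperScore ψ Q) (Ioi θ) θ :=
    continuousWithinAt_integral_comp_comp_sub hψ hint continuous_posPart abs_posPart_le_abs θ
  rw [Gfun_eq_lowerScore_div hψ hint]
  exact hN.div (hN.add hM) (lowerScore_add_upperScore_pos hψ hint hQ).ne'

lemma tendsto_Gfun_atBot (hQ : Q ≠ 0) : Tendsto (Gfun ψ Q) atBot (𝓝 0) := by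
  obtain ⟨a, ha⟩ := exists_measure_Ioi_pos hQ
  rw [Gfun_eq_lowerScore_div hψ hint]
  exact tendsto_div_add_of_tendsto_zero (upperScore_pos hψ hint ha)
    (tendsto_lowerScore_atBot hψ hint) lowerScore_nonneg
    ((eventually_le_atBot a).mono fun _ h => upperScore_anti hψ hint h)

lemma tendsto_Gfun_atTop (hQ : Q ≠ 0) : Tendsto (Gfun ψ Q) atTop (𝓝 1) := by
  obtain ⟨a, ha⟩ := exists_measure_Iio_pos hQ
  have hN := lowerScore_pos hψ hint ha
  have hNa : ∀ᶠ θ in atTop, lowerScore ψ Q a ≤ lowerScore ψ Q θ :=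
    (eventually_ge_atTop a).mono fun _ h => lowerScore_mono hψ hint h
  have hM := tendsto_div_add_of_tendsto_zero hN (tendsto_upperScore_atTop hψ hint)
    upperScore_nonneg hNa
  rw [← sub_zero 1]
  refine (hM.const_sub 1).congr' (hNa.mono fun θ hθ => ?_)
  have hpos : 0 < lowerScore ψ Q θ + upperScore ψ Q θ := by
    linarith [upperScore_nonneg (ψ := ψ) (Q := Q) θ]
  rw [Gfun_eq_lowerScore_div hψ hint, add_comm (upperScore ψ Q θ), one_sub_div hpos.ne',
    add_sub_cancel_right]

lemma MQuant_le_iff (hQ : ∀ θ, Q {θ}ᶜ ≠ 0) {α : ℝ} (hα : α ∈ Ioo 0 1) (θ : ℝ) :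
    MQuant ψ Q α ≤ θ ↔ α ≤ Gfun ψ Q θ := by
  have hQ0 : Q ≠ 0 := fun h => hQ 0 (by simp [h])
  exact sInf_setOf_le_le_iff (Gfun_monotone hψ hint hQ)
    (fun _ => Gfun_continuousWithinAt_Ioi hψ hint (hQ _))
    ((tendsto_Gfun_atBot hψ hint hQ0).eventually (eventually_lt_nhds hα.1)).exists
    (((tendsto_Gfun_atTop hψ hint hQ0).eventually (eventually_gt_nhds hα.2)).exists.imp
      fun _ h => h.le) θ

end Quantile

section Projection

variable {d : ℕ} {P : Measure (EuclideanSpace ℝ (Fin d))}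

lemma Gfun_dirProj_inner {ψ : ℝ → ℝ} (hψ : Measurable ψ) (u z : EuclideanSpace ℝ (Fin d)) :
    Gfun ψ (dirProj P u) ⟪u, z⟫ =
      (∫ y, |ψ ⟪u, y - z⟫| * (if ⟪u, y - z⟫ ≤ 0 then 1 else 0) ∂P) / ∫ y, |ψ ⟪u, y - z⟫| ∂P := by
  have hu : Measurable fun y : EuclideanSpace ℝ (Fin d) => ⟪u, y⟫ := by fun_prop
  have habs : Measurable fun t => |ψ (t - ⟪u, z⟫)| :=
    continuous_abs.measurable.comp (hψ.comp (measurable_sub_const _))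
  have hnum : Measurable fun t => |ψ (t - ⟪u, z⟫)| * if t ≤ ⟪u, z⟫ then (1 : ℝ) else 0 :=
    habs.mul (measurable_const.ite measurableSet_Iic measurable_const)
  rw [Gfun, dirProj, integral_map hu.aemeasurable habs.aestronglyMeasurable,
    integral_map hu.aemeasurable hnum.aestronglyMeasurable]
  simp only [inner_sub_right, sub_nonpos]

lemma dirProj_compl_singleton_ne_zero [IsProbabilityMeasure P] {u : EuclideanSpace ℝ (Fin d)}
    (hP : ∀ c : ℝ, P {z | ⟪u, z⟫ = c} < 1) (c : ℝ) : dirProj P u {c}ᶜ ≠ 0 := by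
  have hu : Measurable fun y : EuclideanSpace ℝ (Fin d) => ⟪u, y⟫ := by fun_prop
  rw [dirProj, Measure.map_apply hu (measurableSet_singleton c).compl, preimage_compl,
    prob_compl_eq_one_sub (hu (measurableSet_singleton c))]
  exact (tsub_pos_of_lt (hP c)).ne'

lemma mem_MRegion_iff {ψ : ℝ → ℝ} (hψ : IsScoreFunction ψ) [IsProbabilityMeasure P]
    (hP1 : ∀ u : EuclideanSpace ℝ (Fin d), ‖u‖ = 1 → ∀ c : ℝ, P {z | ⟪u, z⟫ = c} < 1)
    (hP2 : ∀ u : EuclideanSpace ℝ (Fin d), ‖u‖ = 1 → ∀ θ : ℝ,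
      Integrable (fun t => |ψ (t - θ)|) (dirProj P u))
    {α : ℝ} (hα : α ∈ Ioo 0 1) (z : EuclideanSpace ℝ (Fin d)) :
    z ∈ MRegion ψ P α ↔
      ∀ u : {u : EuclideanSpace ℝ (Fin d) // ‖u‖ = 1}, α ≤ Gfun ψ (dirProj P u) ⟪u.1, z⟫ := by
  simp only [MRegion, MHalf, mem_iInter, Subtype.forall]
  exact forall₂_congr fun u hu => MQuant_le_iff hψ (hP2 u hu)
    (dirProj_compl_singleton_ne_zero (hP1 u hu)) hα _

end Projection

theorem stmt_11 {d : ℕ} (hd : 0 < d) (ρ ψ : ℝ → ℝ) (hρ : LossClass ρ)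
    (hψ : IsLeftDeriv ρ ψ)
    (P : Measure (EuclideanSpace ℝ (Fin d))) [IsProbabilityMeasure P]
    (hP1 : ∀ u : EuclideanSpace ℝ (Fin d), ‖u‖ = 1 → ∀ c : ℝ, P {z | ⟪u, z⟫ = c} < 1)
    (hP2 : ∀ u : EuclideanSpace ℝ (Fin d), ‖u‖ = 1 → ∀ θ : ℝ,
      Integrable (fun t => |ψ (t - θ)|) (dirProj P u)) :
    ∀ z : EuclideanSpace ℝ (Fin d),
      MDepth ψ P z =
        ⨅ u : {u : EuclideanSpace ℝ (Fin d) // ‖u‖ = 1},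
          (∫ y, |ψ ⟪u.1, y - z⟫| * (if ⟪u.1, y - z⟫ ≤ 0 then 1 else 0) ∂P) /
            ∫ y, |ψ ⟪u.1, y - z⟫| ∂P := by
  intro z
  have : Nonempty {u : EuclideanSpace ℝ (Fin d) // ‖u‖ = 1} :=
    ⟨⟨EuclideanSpace.single ⟨0, hd⟩ 1, by simp⟩⟩
  have hs : IsScoreFunction ψ := hρ.isScoreFunction hψ
  let G (u : {u : EuclideanSpace ℝ (Fin d) // ‖u‖ = 1}) : ℝ := Gfun ψ (dirProj P u.1) ⟪u.1, z⟫
  have hregion : {α | α ∈ Ioo (0 : ℝ) 1 ∧ z ∈ MRegion ψ P α} =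
      {α | α ∈ Ioo (0 : ℝ) 1 ∧ ∀ u, α ≤ G u} :=
    Set.ext fun α => and_congr_right fun hα => mem_MRegion_iff hs hP1 hP2 hα z
  rw [MDepth, hregion, sSup_setOf_mem_Ioo_forall_le (g := G) (fun _ => Gfun_nonneg _ _ _)
    fun u => Gfun_le_one (hP2 u.1 u.2 _)]
  exact iInf_congr fun u => Gfun_dirProj_inner hs.measurable u.1 z
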